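/- Every surjective group homomorphism from a finitely generated free group to itself is an isomorphism (finitely generated free groups are Hopfian). -/

import Mathlib

/-!
Free groups are residually finite. Write `w ≠ 1` as `mk L` and let `S` be the finite set of the
elements `mk t` for the suffixes `t` of `L`. Left multiplication by a generator `a` is a partial
injection of `S`; extending it to a permutation `σ a` of `S` gives an action of the free group on
`S` in which `w` sends `1` to `w`, so `w` survives in the finite group `Equiv.Perm S`.

A finitely generated residually finite group `G` is Hopfian: if `φ` is surjective and `φ g = 1`
with `g ∉ H` for some finite-index normal `H`, then precomposition with `φ` is injective on the
finite set `G →* G ⧸ H`, hence surjective, so the quotient map factors through `φ` and kills `g`.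
-/

theorem exists_perm_apply_eq_mul_of_mul_mem {G : Type*} [Group G] (S : Set G) [Finite S]
    (g : G) : ∃ σ : Equiv.Perm S, ∀ (s : S) (hs : g * s ∈ S), σ s = ⟨g * s, hs⟩ := by
  classical
  let e : {s : S // g * s ∈ S} ≃ {t : S // g⁻¹ * t ∈ S} :=
    { toFun := fun s => ⟨⟨g * s, s.2⟩, by simp⟩
      invFun := fun t => ⟨⟨g⁻¹ * t, t.2⟩, by simp⟩
      left_inv := fun s => by ext; simp
      right_inv := fun t => by ext; simp }
  exact ⟨e.extendSubtype, fun s hs => e.extendSubtype_apply_of_mem s hs⟩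

theorem Group.FG.finite_monoidHom (G M : Type*) [Group G] [Group.FG G] [Monoid M] [Finite M] :
    Finite (G →* M) := by
  obtain ⟨S, hS⟩ := Group.FG.out (G := G)
  refine Finite.of_injective (fun f : G →* M => fun s : S => f s) fun f g hfg => ?_
  exact MonoidHom.eq_of_eqOn_dense hS fun x hx => congrFun hfg ⟨x, hx⟩

theorem Group.ResiduallyFinite.injective_of_surjective {G : Type*} [Group G] [Group.FG G]
    [Group.ResiduallyFinite G] {φ : G →* G} (hφ : Function.Surjective φ) :
    Function.Injective φ := by
  refine (injective_iff_map_eq_one φ).mpr fun g hg => ?_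
  by_contra hg1
  obtain ⟨H, hgH⟩ := Group.exists_finiteIndexNormalSubgroup_notMem g hg1
  have := Group.FG.finite_monoidHom G (G ⧸ H.toSubgroup)
  have hcomp : Function.Injective fun ψ : G →* G ⧸ H.toSubgroup => ψ.comp φ :=
    fun _ _ h => (MonoidHom.cancel_right hφ).mp h
  obtain ⟨ψ, hψ⟩ := Finite.injective_iff_surjective.mp hcomp (QuotientGroup.mk' H.toSubgroup)
  have hg_mk : (g : G ⧸ H.toSubgroup) = 1 := by
    rw [← QuotientGroup.mk'_apply, ← hψ, MonoidHom.comp_apply, hg, map_one]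
  exact hgH ((QuotientGroup.eq_one_iff g).mp hg_mk)

namespace FreeGroup

variable {α : Type*}

section LiftPerm

variable {S : Set (FreeGroup α)} (σ : α → Equiv.Perm S)

theorem coe_lift_perm_mk_singleton_apply
    (hσ : ∀ a (s : S) (hs : of a * (s : FreeGroup α) ∈ S), σ a s = ⟨of a * s, hs⟩)
    (p : α × Bool) (s : S) (hs : mk [p] * (s : FreeGroup α) ∈ S) :
    (lift σ (mk [p]) s : FreeGroup α) = mk [p] * s := by
  obtain ⟨a, _ | _⟩ := p
  · have hinv : mk [(a, false)] = (of a)⁻¹ := by simp [of, inv_mk, invRev]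
    rw [hinv] at hs ⊢
    have hσ_inv : σ a ⟨_, hs⟩ = s := by
      rw [hσ a _ (by simp)]
      simp
    rw [MonoidHom.map_inv, lift_apply_of, Equiv.Perm.inv_def,
      (Equiv.symm_apply_eq _).mpr hσ_inv.symm]
  · rw [← of] at hs ⊢
    rw [lift_apply_of, hσ a s hs]

theorem coe_lift_perm_mk_apply_one
    (hσ : ∀ a (s : S) (hs : of a * (s : FreeGroup α) ∈ S), σ a s = ⟨of a * s, hs⟩)
    (h1 : 1 ∈ S) :
    ∀ L : List (α × Bool), (∀ t ∈ L.tails, mk t ∈ S) →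
      (lift σ (mk L) ⟨1, h1⟩ : FreeGroup α) = mk L
  | [], _ => rfl
  | p :: L, hL => by
    have ih := coe_lift_perm_mk_apply_one hσ h1 L fun t ht => hL t (List.mem_cons_of_mem _ ht)
    have hmk : mk (p :: L) = mk [p] * mk L := by rw [mul_mk]; rfl
    have hmem : mk [p] * (lift σ (mk L) ⟨1, h1⟩ : FreeGroup α) ∈ S := by
      rw [ih, ← hmk]
      exact hL _ (List.mem_cons_self ..)
    rw [hmk, MonoidHom.map_mul, Equiv.Perm.mul_apply,
      coe_lift_perm_mk_singleton_apply σ hσ p _ hmem, ih]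

end LiftPerm

instance : Group.ResiduallyFinite (FreeGroup α) := by
  refine Group.residuallyFinite_of_forall_exists_finite_monoidHom fun w hw => ?_
  obtain ⟨L, rfl⟩ : ∃ L, mk L = w := Quot.exists_rep w
  set S : Set (FreeGroup α) := mk '' {t | t ∈ L.tails}
  have : Finite S := (List.finite_toSet _).image _
  choose σ hσ using fun a => exists_perm_apply_eq_mul_of_mul_mem S (of a)
  have h1 : (1 : FreeGroup α) ∈ S := ⟨[], by simp, rfl⟩
  refine ⟨Equiv.Perm S, inferInstance, inferInstance, lift σ, fun hL => hw ?_⟩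
  have hw_one := coe_lift_perm_mk_apply_one σ hσ h1 L fun t ht => ⟨t, ht, rfl⟩
  rw [← hw_one, hL]
  rfl

end FreeGroup

theorem stmt_1 (n : ℕ) (φ : FreeGroup (Fin n) →* FreeGroup (Fin n))
    (hφ : Function.Surjective φ) : Function.Bijective φ :=
  ⟨Group.ResiduallyFinite.injective_of_surjective hφ, hφ⟩
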